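/- Let (A_l, B_l, C_l, D_l) be an ODE-LTI associated with the DAE d(Ex)/dt = Ax + Bu, with state map M = (EC_s)⁺ where C_s consists of the first n rows of C_l. If (x,u) is a solution of the DAE on interval I, then v := M·E·x is absolutely continuous, g := D_l⁺((x;u) − C_l·M·E·x) is locally integrable, and v̇ = A_l v + B_l g a.e. and (x;u) = C_l v + D_l g a.e. -/

import Mathlib

open MeasureTheory Set Filter Matrix

open Classical in
noncomputable def pinv {α β : Type} [Fintype α] [Fintype β] [DecidableEq α] [DecidableEq β]
    (M : Matrix α β ℝ) : Matrix β α ℝ :=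
  if h : ∃ X : Matrix β α ℝ,
      M * X * M = M ∧ X * M * X = X ∧ (M * X)ᵀ = M * X ∧ (X * M)ᵀ = X * M
  then h.choose else 0

def IsNiceInterval (I : Set ℝ) : Prop :=
  (∃ a b, I = Set.Icc a b) ∨ (∃ a, I = Set.Ici a) ∨ (∃ a, I = Set.Iic a) ∨ I = Set.univ

def IsDAESolution {c n m : ℕ} (E A : Matrix (Fin c) (Fin n) ℝ)
    (B : Matrix (Fin c) (Fin m) ℝ) (I : Set ℝ)
    (x : ℝ → Fin n → ℝ) (u : ℝ → Fin m → ℝ) : Prop :=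
  LocallyIntegrableOn x I ∧ LocallyIntegrableOn u I ∧
  ∀ t₀ ∈ I, ∀ t ∈ I, t₀ ≤ t →
    E.mulVec (x t) = E.mulVec (x t₀) + ∫ s in t₀..t, (A.mulVec (x s) + B.mulVec (u s))

def IsStateTraj {r : ℕ} {σ : Type} [Fintype σ] (Al : Matrix (Fin r) (Fin r) ℝ)
    (Bl : Matrix (Fin r) σ ℝ)
    (I : Set ℝ) (p : ℝ → Fin r → ℝ) (g : ℝ → σ → ℝ) : Prop :=
  LocallyIntegrableOn p I ∧ LocallyIntegrableOn g I ∧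
  ∀ t₀ ∈ I, ∀ t ∈ I, t₀ ≤ t →
    p t = p t₀ + ∫ τ in t₀..t, (Al.mulVec (p τ) + Bl.mulVec (g τ))

def RealizesOn {c n m nh k : ℕ} (E A : Matrix (Fin c) (Fin n) ℝ) (B : Matrix (Fin c) (Fin m) ℝ)
    (Al : Matrix (Fin nh) (Fin nh) ℝ) (Bl : Matrix (Fin nh) (Fin k) ℝ)
    (Cl : Matrix (Fin n ⊕ Fin m) (Fin nh) ℝ) (Dl : Matrix (Fin n ⊕ Fin m) (Fin k) ℝ)
    (I : Set ℝ) : Prop :=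
  (∀ x u, IsDAESolution E A B I x u →
    ∃ p g, IsStateTraj Al Bl I p g ∧
      ∀ᵐ t ∂(volume.restrict I), Sum.elim (x t) (u t) = Cl.mulVec (p t) + Dl.mulVec (g t)) ∧
  (∀ p g, IsStateTraj Al Bl I p g →
    ∃ x u, IsDAESolution E A B I x u ∧
      ∀ᵐ t ∂(volume.restrict I), Sum.elim (x t) (u t) = Cl.mulVec (p t) + Dl.mulVec (g t))

def firstRows {n m nh : ℕ} (Cl : Matrix (Fin n ⊕ Fin m) (Fin nh) ℝ) :
    Matrix (Fin n) (Fin nh) ℝ :=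
  Matrix.of fun i j => Cl (Sum.inl i) j

def IsAssociated {c n m nh k : ℕ} (E A : Matrix (Fin c) (Fin n) ℝ)
    (B : Matrix (Fin c) (Fin m) ℝ)
    (Al : Matrix (Fin nh) (Fin nh) ℝ) (Bl : Matrix (Fin nh) (Fin k) ℝ)
    (Cl : Matrix (Fin n ⊕ Fin m) (Fin nh) ℝ) (Dl : Matrix (Fin n ⊕ Fin m) (Fin k) ℝ) : Prop :=
  nh ≤ n ∧
  ((Dl = 0 ∧ Bl = 0 ∧ k = 1) ∨ Dl.rank = k) ∧
  E * firstRows Dl = 0 ∧ (E * firstRows Cl).rank = nh ∧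
  ∀ I : Set ℝ, IsNiceInterval I → RealizesOn E A B Al Bl Cl Dl I

def ConsistencySet {c n m : ℕ} (E A : Matrix (Fin c) (Fin n) ℝ)
    (B : Matrix (Fin c) (Fin m) ℝ) : Set (Fin c → ℝ) :=
  {z | ∃ I : Set ℝ, IsNiceInterval I ∧ (0 : ℝ) ∈ I ∧
    ∃ x u, IsDAESolution E A B I x u ∧ E.mulVec (x 0) = z}

/-!
The realization property provides a trajectory `(p, g)` of the ODE-LTI with `(x; u) = C_l p + D_l g`
almost everywhere. On the first `n` rows, `E` annihilates `D_s`, so `M E x = M (E C_s) p = p` a.e.,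
`M` being a left inverse of the full column rank matrix `E C_s`. Consequently
`(x; u) - C_l M E x = D_l g` a.e., and `D_l⁺` recovers `g` when `D_l` has full column rank, while
otherwise `B_l = D_l = 0`. Finally `M E x` and `p` are both continuous, being images of primitives,
so they agree everywhere on `I` and the integral equation of `p` passes to `M E x`.
-/

section PseudoInverse

variable {α β : Type} [Fintype α] [Fintype β] [DecidableEq β]

theorem mul_pinv_mul_self_of_exists [DecidableEq α] {M : Matrix α β ℝ}
    (h : ∃ X : Matrix β α ℝ,
      M * X * M = M ∧ X * M * X = X ∧ (M * X)ᵀ = M * X ∧ (X * M)ᵀ = X * M) :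
    M * pinv M * M = M := by
  rw [pinv, dif_pos h]
  exact h.choose_spec.1

theorem isUnit_transpose_mul_self_of_rank_eq_card {M : Matrix α β ℝ}
    (h : M.rank = Fintype.card β) : IsUnit (Mᵀ * M) := by
  have hrange : LinearMap.range (Mᵀ * M).mulVecLin = ⊤ :=
    Submodule.eq_top_of_finrank_eq (by
      rw [Module.finrank_fintype_fun_eq_card, ← rank, rank_transpose_mul_self, h])
  exact mulVec_surjective_iff_isUnit.mp (LinearMap.range_eq_top.mp hrange)

theorem pinv_mul_self_of_rank_eq_card [DecidableEq α] {M : Matrix α β ℝ}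
    (h : M.rank = Fintype.card β) : pinv M * M = 1 := by
  have hdet : IsUnit (Mᵀ * M).det :=
    (isUnit_iff_isUnit_det _).mp (isUnit_transpose_mul_self_of_rank_eq_card h)
  set L := (Mᵀ * M)⁻¹ * Mᵀ with hLdef
  have hL : L * M = 1 := by rw [Matrix.mul_assoc]; exact nonsing_inv_mul _ hdet
  have hsymm : ((Mᵀ * M)⁻¹)ᵀ = (Mᵀ * M)⁻¹ := by
    rw [transpose_nonsing_inv, transpose_mul, transpose_transpose]
  have hpenrose : ∃ X : Matrix β α ℝ,
      M * X * M = M ∧ X * M * X = X ∧ (M * X)ᵀ = M * X ∧ (X * M)ᵀ = X * M :=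
    ⟨L, by rw [Matrix.mul_assoc, hL, Matrix.mul_one], by rw [hL, Matrix.one_mul],
      by simp only [hLdef, transpose_mul, transpose_transpose, hsymm, Matrix.mul_assoc],
      by rw [hL, transpose_one]⟩
  calc pinv M * M = L * M * pinv M * M := by rw [hL, Matrix.one_mul]
    _ = L * (M * pinv M * M) := by simp only [Matrix.mul_assoc]
    _ = 1 := by rw [mul_pinv_mul_self_of_exists hpenrose, hL]

theorem mulVec_pinv_mulVec_mulVec_of_rank_eq_card_or_eq_zero [DecidableEq α] {γ : Type}
    [Fintype γ] {M : Matrix α β ℝ} {F : Matrix γ β ℝ} (h : M.rank = Fintype.card β ∨ F = 0)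
    (v : β → ℝ) : F *ᵥ (pinv M *ᵥ (M *ᵥ v)) = F *ᵥ v := by
  rcases h with hrank | rfl
  · rw [mulVec_mulVec (M := pinv M), pinv_mul_self_of_rank_eq_card hrank, one_mulVec]
  · simp

end PseudoInverse

section LocallyIntegrable

variable {X : Type*} [MeasurableSpace X] [TopologicalSpace X] {μ : Measure X} {s : Set X}
  {α β : Type} [Fintype α] [Fintype β]

theorem MeasureTheory.LocallyIntegrableOn.matrix_mulVec {f : X → β → ℝ}
    (hf : LocallyIntegrableOn f s μ) (M : Matrix α β ℝ) :
    LocallyIntegrableOn (fun t => M *ᵥ f t) s μ :=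
  (LinearMap.toContinuousLinearMap M.mulVecLin).locallyIntegrableOn_comp hf

theorem MeasureTheory.LocallyIntegrableOn.sumElim {f : X → α → ℝ} {g : X → β → ℝ}
    (hf : LocallyIntegrableOn f s μ) (hg : LocallyIntegrableOn g s μ) :
    LocallyIntegrableOn (fun t => Sum.elim (f t) (g t)) s μ := by
  classical
  have hsplit : (fun t => Sum.elim (f t) (g t)) =
      fun t => fromRows 1 0 *ᵥ f t + fromRows 0 1 *ᵥ g t := by
    ext t (i | i) <;> simp [fromRows_mulVec]
  rw [hsplit]
  exact (hf.matrix_mulVec _).add (hg.matrix_mulVec _)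

end LocallyIntegrable

section Primitive

variable {F : Type*} [NormedAddCommGroup F] [NormedSpace ℝ F]

theorem continuousOn_Icc_of_eq_add_integral {f h : ℝ → F} {a b : ℝ} (hab : a ≤ b)
    (hh : IntegrableOn h (Icc a b)) (hf : ∀ s ∈ Icc a b, f s = f a + ∫ τ in a..s, h τ) :
    ContinuousOn f (Icc a b) := by
  rw [← uIcc_of_le hab] at hh ⊢
  exact (continuousOn_const.add (intervalIntegral.continuousOn_primitive_interval hh)).congr
    (by rw [uIcc_of_le hab]; exact hf)

theorem eq_add_integral_of_ae_eq {v p h h' : ℝ → F} {a b : ℝ} (hab : a ≤ b)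
    (hv : ContinuousOn v (Icc a b)) (hh : IntegrableOn h (Icc a b))
    (hp : ∀ s ∈ Icc a b, p s = p a + ∫ τ in a..s, h τ)
    (hvp : v =ᵐ[volume.restrict (Icc a b)] p) (hh' : h' =ᵐ[volume.restrict (Icc a b)] h) :
    v b = v a + ∫ τ in a..b, h' τ := by
  rcases hab.eq_or_lt with rfl | hlt
  · simp
  have hveq : EqOn v p (Icc a b) := Measure.eqOn_Icc_of_ae_eq volume hlt.ne hvp hv
    (continuousOn_Icc_of_eq_add_integral hab hh hp)
  have hint : ∫ τ in a..b, h' τ = ∫ τ in a..b, h τ :=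
    intervalIntegral.integral_congr_ae_restrict
      (ae_restrict_of_ae_restrict_of_subset (uIoc_of_le hab ▸ Ioc_subset_Icc_self) hh')
  rw [hveq ⟨le_rfl, hab⟩, hveq ⟨hab, le_rfl⟩, hint]
  exact hp b ⟨hab, le_rfl⟩

end Primitive

theorem IsNiceInterval.ordConnected {I : Set ℝ} (hI : IsNiceInterval I) : I.OrdConnected := by
  rcases hI with ⟨a, b, rfl⟩ | ⟨a, rfl⟩ | ⟨a, rfl⟩ | rfl
  · exact ordConnected_Icc
  · exact ordConnected_Ici
  · exact ordConnected_Iic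
  · exact ordConnected_univ

theorem IsDAESolution.continuousOn_mulVec {c n m : ℕ} {E A : Matrix (Fin c) (Fin n) ℝ}
    {B : Matrix (Fin c) (Fin m) ℝ} {I : Set ℝ} {x : ℝ → Fin n → ℝ} {u : ℝ → Fin m → ℝ}
    (hsol : IsDAESolution E A B I x u) (hI : I.OrdConnected) {a b : ℝ} (ha : a ∈ I) (hb : b ∈ I)
    (hab : a ≤ b) : ContinuousOn (fun t => E *ᵥ x t) (Icc a b) := by
  obtain ⟨hx, hu, hdae⟩ := hsol
  have hsub : Icc a b ⊆ I := hI.out ha hb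
  exact continuousOn_Icc_of_eq_add_integral hab
    (((hx.matrix_mulVec A).add (hu.matrix_mulVec B)).integrableOn_compact_subset hsub isCompact_Icc)
    fun s hs => hdae a ha s (hsub hs) hs.1

theorem IsStateTraj.of_ae_eq {r : ℕ} {σ : Type} [Fintype σ] {Al : Matrix (Fin r) (Fin r) ℝ}
    {Bl : Matrix (Fin r) σ ℝ} {I : Set ℝ} {p v : ℝ → Fin r → ℝ} {g w : ℝ → σ → ℝ}
    (hpg : IsStateTraj Al Bl I p g) (hI : I.OrdConnected) (hv : LocallyIntegrableOn v I)
    (hw : LocallyIntegrableOn w I)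
    (hvc : ∀ a ∈ I, ∀ b ∈ I, a ≤ b → ContinuousOn v (Icc a b))
    (hvp : v =ᵐ[volume.restrict I] p) (hBw : ∀ᵐ t ∂volume.restrict I, Bl *ᵥ w t = Bl *ᵥ g t) :
    IsStateTraj Al Bl I v w := by
  obtain ⟨hp, hg, hode⟩ := hpg
  refine ⟨hv, hw, fun a ha b hb hab => ?_⟩
  have hsub : Icc a b ⊆ I := hI.out ha hb
  refine eq_add_integral_of_ae_eq hab (hvc a ha b hb hab)
    (((hp.matrix_mulVec Al).add (hg.matrix_mulVec Bl)).integrableOn_compact_subset hsub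
      isCompact_Icc)
    (fun s hs => hode a ha s (hsub hs) hs.1) (ae_restrict_of_ae_restrict_of_subset hsub hvp) ?_
  filter_upwards [ae_restrict_of_ae_restrict_of_subset hsub hvp,
    ae_restrict_of_ae_restrict_of_subset hsub hBw] with t hvt hwt
  simp only [hvt, hwt, Pi.add_apply]

theorem mulVec_mulVec_eq_of_sumElim_eq {c n m nh k : ℕ} {E : Matrix (Fin c) (Fin n) ℝ}
    {Cl : Matrix (Fin n ⊕ Fin m) (Fin nh) ℝ} {Dl : Matrix (Fin n ⊕ Fin m) (Fin k) ℝ}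
    {M : Matrix (Fin nh) (Fin c) ℝ} (hM : M * (E * firstRows Cl) = 1)
    (hED : E * firstRows Dl = 0) {x : Fin n → ℝ} {u : Fin m → ℝ} {p : Fin nh → ℝ}
    {g : Fin k → ℝ} (h : Sum.elim x u = Cl *ᵥ p + Dl *ᵥ g) : M *ᵥ (E *ᵥ x) = p := by
  have hx : x = firstRows Cl *ᵥ p + firstRows Dl *ᵥ g := by
    funext i
    exact congrFun h (Sum.inl i)
  rw [hx, mulVec_add, mulVec_mulVec, mulVec_mulVec, hED, zero_mulVec, add_zero, mulVec_mulVec,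
    hM, one_mulVec]

/-- Theorem (dae2lin:theo_main), first half: if `(x,u)` solves the DAE, then
`v = M·E·x` and `g = D_l⁺((x;u) − C_l·M·E·x)` form a state/input trajectory of the
associated ODE-LTI whose output reproduces `(x;u)` a.e. -/
theorem dae_solution_gives_ode_trajectory {c n m nh k : ℕ}
    (E A : Matrix (Fin c) (Fin n) ℝ) (B : Matrix (Fin c) (Fin m) ℝ)
    (Al : Matrix (Fin nh) (Fin nh) ℝ) (Bl : Matrix (Fin nh) (Fin k) ℝ)
    (Cl : Matrix (Fin n ⊕ Fin m) (Fin nh) ℝ) (Dl : Matrix (Fin n ⊕ Fin m) (Fin k) ℝ)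
    (hassoc : IsAssociated E A B Al Bl Cl Dl)
    (I : Set ℝ) (hI : IsNiceInterval I)
    (x : ℝ → Fin n → ℝ) (u : ℝ → Fin m → ℝ)
    (hsol : IsDAESolution E A B I x u) :
    IsStateTraj Al Bl I
      (fun t => (pinv (E * firstRows Cl)).mulVec (E.mulVec (x t)))
      (fun t => (pinv Dl).mulVec (Sum.elim (x t) (u t) -
        Cl.mulVec ((pinv (E * firstRows Cl)).mulVec (E.mulVec (x t))))) ∧
    ∀ᵐ t ∂(volume.restrict I),
      Sum.elim (x t) (u t) =
        Cl.mulVec ((pinv (E * firstRows Cl)).mulVec (E.mulVec (x t))) +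
        Dl.mulVec ((pinv Dl).mulVec (Sum.elim (x t) (u t) -
          Cl.mulVec ((pinv (E * firstRows Cl)).mulVec (E.mulVec (x t))))) := by
  obtain ⟨-, hDB, hED, hrank, hreal⟩ := hassoc
  obtain ⟨p, g, hpg, hout⟩ := (hreal I hI).1 x u hsol
  set M := pinv (E * firstRows Cl)
  have hM : M * (E * firstRows Cl) = 1 := pinv_mul_self_of_rank_eq_card (by simpa using hrank)
  have hvp : ∀ᵐ t ∂volume.restrict I, M *ᵥ (E *ᵥ x t) = p t :=
    hout.mono fun t ht => mulVec_mulVec_eq_of_sumElim_eq hM hED ht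
  have hres : ∀ᵐ t ∂volume.restrict I,
      Sum.elim (x t) (u t) - Cl *ᵥ (M *ᵥ (E *ᵥ x t)) = Dl *ᵥ g t := by
    filter_upwards [hout, hvp] with t hxu hv
    rw [hv, hxu, add_sub_cancel_left]
  have hvloc := (hsol.1.matrix_mulVec E).matrix_mulVec M
  have hwloc := ((hsol.1.sumElim hsol.2.1).sub (hvloc.matrix_mulVec Cl)).matrix_mulVec (pinv Dl)
  have hvcont : ∀ a ∈ I, ∀ b ∈ I, a ≤ b → ContinuousOn (fun t => M *ᵥ (E *ᵥ x t)) (Icc a b) :=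
    fun a ha b hb hab => (Continuous.matrix_mulVec continuous_const continuous_id).comp_continuousOn
      (hsol.continuousOn_mulVec hI.ordConnected ha hb hab)
  refine ⟨hpg.of_ae_eq hI.ordConnected hvloc hwloc hvcont hvp ?_, ?_⟩
  · filter_upwards [hres] with t ht
    rw [ht]
    exact mulVec_pinv_mulVec_mulVec_of_rank_eq_card_or_eq_zero
      (hDB.symm.imp (by simpa using ·) (·.2.1)) (g t)
  · filter_upwards [hout, hvp, hres] with t hxu hv ht
    rw [ht, mulVec_pinv_mulVec_mulVec_of_rank_eq_card_or_eq_zero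
      (hDB.symm.imp (by simpa using ·) (·.1)), hv]
    exact hxu
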